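/- arXiv:2209.06463 — 4 statements merged into one kernel-verified Lean document; each statement's English description precedes it below -/
import Mathlib

section
/- Let V be a real vector space of finite dimension k ≥ 1. Let v₁, …, v_k ∈ V be linearly independent and let λ₁, …, λ_k be linear functionals on V satisfying λᵢ(vⱼ) = δᵢⱼ for all 1 ≤ i, j ≤ k. For each sign vector σ = (σ₁, …, σ_k) ∈ {−1, 1}^k set V_σ := {v ∈ V : sign(λᵢ(v)) = σᵢ for all i = 1, …, k}. Then for any choice of one vector v_σ ∈ V_σ for each σ ∈ {−1, 1}^k, the real span of {v_σ : σ ∈ {−1, 1}^k} equals V. -/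
/-!
If a linear functional `f` vanishes on every `c σ`, expand `f = ∑ᵢ f(vᵢ) λᵢ` and choose `σ`
with `σᵢ` of sign opposite to `f(vᵢ)`. Every term of `f(c σ) = ∑ᵢ f(vᵢ) λᵢ(c σ)` is then `≤ 0`,
and it is `0` only if `f(vᵢ) = 0` because `λᵢ(c σ) ≠ 0`; so `f(c σ) = 0` forces `f = 0`.
-/

open Module

def signVectors (ι : Type*) : Set (ι → ℝ) := {σ | ∀ i, σ i = 1 ∨ σ i = -1}

namespace Real

lemma pos_of_sign_eq_one {r : ℝ} (h : sign r = 1) : 0 < r := by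
  rcases lt_trichotomy r 0 with hr | rfl | hr
  · rw [sign_of_neg hr] at h; norm_num at h
  · rw [sign_zero] at h; norm_num at h
  · exact hr

lemma neg_of_sign_eq_neg_one {r : ℝ} (h : sign r = -1) : r < 0 := by
  rcases lt_trichotomy r 0 with hr | rfl | hr
  · exact hr
  · rw [sign_zero] at h; norm_num at h
  · rw [sign_of_pos hr] at h; norm_num at h

end Real

section OpposingSign

variable {ι : Type*}

noncomputable def opposingSign (a : ι → ℝ) : ι → ℝ := fun i => if 0 < a i then -1 else 1

lemma opposingSign_mem_signVectors (a : ι → ℝ) : opposingSign a ∈ signVectors ι := fun i => by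
  by_cases h : 0 < a i <;> simp [opposingSign, h]

lemma mul_nonpos_of_sign_eq_opposingSign {a t : ι → ℝ}
    (ht : ∀ i, Real.sign (t i) = opposingSign a i) (i : ι) : a i * t i ≤ 0 := by
  have hti := ht i
  by_cases ha : 0 < a i
  · rw [opposingSign, if_pos ha] at hti
    exact mul_nonpos_of_nonneg_of_nonpos ha.le (Real.neg_of_sign_eq_neg_one hti).le
  · rw [opposingSign, if_neg ha] at hti
    exact mul_nonpos_of_nonpos_of_nonneg (not_lt.mp ha) (Real.pos_of_sign_eq_one hti).le

lemma eq_zero_of_sum_mul_eq_zero_of_sign_eq_opposingSign [Fintype ι] {a t : ι → ℝ}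
    (ht : ∀ i, Real.sign (t i) = opposingSign a i) (hsum : ∑ i, a i * t i = 0) : a = 0 := by
  have hterm := (Finset.sum_eq_zero_iff_of_nonpos fun i _ =>
    mul_nonpos_of_sign_eq_opposingSign ht i).mp hsum
  funext i
  have ht_ne : t i ≠ 0 := by
    intro h0
    rcases opposingSign_mem_signVectors a i with h | h <;>
      rw [← ht i, h0, Real.sign_zero] at h <;> norm_num at h
  exact (mul_eq_zero.mp (hterm i (Finset.mem_univ i))).resolve_right ht_ne

end OpposingSign

theorem Module.Basis.span_image_signVectors_eq_top {ι V : Type*} [Fintype ι] [AddCommGroup V]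
    [Module ℝ V] (b : Basis ι ℝ V) (c : (ι → ℝ) → V)
    (hc : ∀ σ ∈ signVectors ι, ∀ i, Real.sign (b.coord i (c σ)) = σ i) :
    Submodule.span ℝ (c '' signVectors ι) = ⊤ := by
  by_contra hne
  obtain ⟨f, hf, hf_span⟩ :=
    Submodule.exists_dual_map_eq_bot_of_lt_top (lt_top_iff_ne_top.mpr hne) inferInstance
  have hf_vanish : ∀ σ ∈ signVectors ι, f (c σ) = 0 := fun σ hσ =>
    LinearMap.le_ker_iff_map.mpr hf_span (Submodule.subset_span ⟨σ, hσ, rfl⟩)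
  set a : ι → ℝ := fun i => f (b i)
  set σ := opposingSign a
  have hsum : ∑ i, a i * b.coord i (c σ) = 0 := by
    rw [← hf_vanish σ (opposingSign_mem_signVectors a)]
    conv_rhs => rw [← b.sum_dual_apply_smul_coord f]
    simp only [LinearMap.sum_apply, LinearMap.smul_apply, smul_eq_mul, a]
  have ha := eq_zero_of_sum_mul_eq_zero_of_sign_eq_opposingSign
    (hc σ (opposingSign_mem_signVectors a)) hsum
  exact hf (b.ext fun i => congrFun ha i)

theorem span_of_sign_vectors_general
    {V : Type*} [AddCommGroup V] [Module ℝ V] [FiniteDimensional ℝ V]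
    (k : ℕ) (hdim : Module.finrank ℝ V = k)
    (v : Fin k → V) (hv : LinearIndependent ℝ v)
    (lam : Fin k → (V →ₗ[ℝ] ℝ))
    (hlam : ∀ i j, lam i (v j) = if i = j then 1 else 0)
    (c : (Fin k → ℝ) → V)
    (hc : ∀ σ : Fin k → ℝ, (∀ i, σ i = 1 ∨ σ i = -1) →
      ∀ i, Real.sign (lam i (c σ)) = σ i) :
    Submodule.span ℝ (c '' {σ : Fin k → ℝ | ∀ i, σ i = 1 ∨ σ i = -1}) = ⊤ := by
  let b : Basis (Fin k) ℝ V := basisOfLinearIndependentOfCardEqFinrank' v hv (by simp [hdim])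
  have hb : ⇑b = v := coe_basisOfLinearIndependentOfCardEqFinrank' ..
  have hcoord : ∀ i, b.coord i = lam i := fun i => b.ext fun j => by
    rw [b.coord_apply, b.repr_self, Finsupp.single_apply, hb, hlam]
    exact if_congr eq_comm rfl rfl
  exact b.span_image_signVectors_eq_top c fun σ hσ i => hcoord i ▸ hc σ hσ i

/-- Lemma: let `V` be a `k`-dimensional real vector space (`k ≥ 1`), `v₁, …, v_k`
linearly independent, and `λ₁, …, λ_k` linear functionals with `λᵢ(vⱼ) = δᵢⱼ`.
For each sign vector `σ ∈ {-1,1}^k` let `V_σ = {v : sign(λᵢ(v)) = σᵢ ∀ i}`.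
Then any choice of one vector from each `V_σ` spans `V`. -/
theorem span_of_sign_vectors
    {V : Type*} [AddCommGroup V] [Module ℝ V] [FiniteDimensional ℝ V]
    (k : ℕ) (hk : 1 ≤ k) (hdim : Module.finrank ℝ V = k)
    (v : Fin k → V) (hv : LinearIndependent ℝ v)
    (lam : Fin k → (V →ₗ[ℝ] ℝ))
    (hlam : ∀ i j, lam i (v j) = if i = j then 1 else 0)
    (c : (Fin k → ℝ) → V)
    (hc : ∀ σ : Fin k → ℝ, (∀ i, σ i = 1 ∨ σ i = -1) →
      ∀ i, Real.sign (lam i (c σ)) = σ i) :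
    Submodule.span ℝ (c '' {σ : Fin k → ℝ | ∀ i, σ i = 1 ∨ σ i = -1}) = ⊤ :=
  span_of_sign_vectors_general k hdim v hv lam hlam c hc
end

section
/- Let V be a real vector space of finite dimension k ≥ 1, let U be a proper linear subspace of V, and let λ₁, …, λ_k be linearly independent linear functionals on V. Then there exists a vector v ∈ V such that for every real number N > 0 and every u ∈ U, there is an index j ∈ {1, …, k} (depending on u) with |λⱼ(u + N·v)| > N. -/
/-- Proposition: let `V` be a `k`-dimensional real vector space (`k ≥ 1`),
`U ⊊ V` a proper subspace, and `λ₁, …, λ_k` linearly independent linear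
functionals on `V`. Then there is `v ∈ V` such that for every `N > 0` and
every `u ∈ U` there is an index `j` with `|λⱼ(u + N·v)| > N`. -/
theorem exists_escape_direction
    {V : Type*} [AddCommGroup V] [Module ℝ V] [FiniteDimensional ℝ V]
    (k : ℕ) (hk : 1 ≤ k) (hdim : Module.finrank ℝ V = k)
    (U : Submodule ℝ V) (hU : U ≠ ⊤)
    (lam : Fin k → (V →ₗ[ℝ] ℝ)) (hlam : LinearIndependent ℝ lam) :
    ∃ v : V, ∀ N : ℝ, 0 < N → ∀ u ∈ U, ∃ j : Fin k, |lam j (u + N • v)| > N := by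
  classical
  haveI : Nonempty (Fin k) := ⟨⟨0, hk⟩⟩
  -- the evaluation map into ℝ^k
  set f : V →ₗ[ℝ] (Fin k → ℝ) := LinearMap.pi lam with hf
  -- lam forms a basis of the dual, so f is injective
  have hcard : Fintype.card (Fin k) = Module.finrank ℝ (Module.Dual ℝ V) := by
    rw [Fintype.card_fin, Subspace.dual_finrank_eq, hdim]
  let b := basisOfLinearIndependentOfCardEqFinrank hlam hcard
  have hb : ∀ j, (b j : Module.Dual ℝ V) = lam j := fun j =>
    congrFun (coe_basisOfLinearIndependentOfCardEqFinrank hlam hcard) j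
  have hfinj : Function.Injective f := by
    rw [← LinearMap.ker_eq_bot]
    rw [Submodule.eq_bot_iff]
    intro x hx
    have hx' : ∀ j, lam j x = 0 := by
      intro j
      have := congrFun (show f x = 0 from hx) j
      simpa [hf] using this
    have hall : ∀ φ : Module.Dual ℝ V, φ x = 0 := by
      intro φ
      have := b.sum_repr φ
      rw [← this]
      simp [LinearMap.sum_apply, hb, hx']
    exact (Module.forall_dual_apply_eq_zero_iff ℝ x).mp hall
  -- pick x ∉ U
  obtain ⟨x, hx⟩ : ∃ x : V, x ∉ U := by
    by_contra h
    push_neg at h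
    exact hU (Submodule.eq_top_iff'.mpr h)
  -- W = image of U, closed, and f x ∉ W
  set W : Submodule ℝ (Fin k → ℝ) := U.map f with hW
  have hWclosed : IsClosed (W : Set (Fin k → ℝ)) := Submodule.closed_of_finiteDimensional W
  have hfxW : f x ∉ (W : Set (Fin k → ℝ)) := by
    rintro ⟨u, hu, hux⟩
    exact hx (hfinj hux ▸ hu)
  set d : ℝ := Metric.infDist (f x) (W : Set (Fin k → ℝ)) with hd
  have hdpos : 0 < d := by
    rw [hd]
    rw [← hWclosed.closure_eq] at hfxW
    rw [hWclosed.closure_eq] at hfxW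
    exact (hWclosed.notMem_iff_infDist_pos ⟨0, W.zero_mem⟩).mp hfxW
  refine ⟨(2 / d) • x, ?_⟩
  intro N hN u hu
  by_contra h
  push_neg at h
  have hnorm : ‖f (u + N • (2 / d) • x)‖ ≤ N := by
    apply pi_norm_le_iff_of_nonneg hN.le |>.mpr
    intro j
    simpa [hf, Real.norm_eq_abs] using h j
  set c : ℝ := d / (2 * N) with hc
  have hcpos : 0 < c := div_pos hdpos (by linarith)
  have hmem : -(c • f u) ∈ (W : Set (Fin k → ℝ)) :=
    W.neg_mem (W.smul_mem c ⟨u, hu, rfl⟩)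
  have hdle : d ≤ dist (f x) (-(c • f u)) := Metric.infDist_le_dist_of_mem hmem
  have hkey : f x - -(c • f u) = c • f (u + N • (2 / d) • x) := by
    have hne : d ≠ 0 := ne_of_gt hdpos
    have hNne : N ≠ 0 := ne_of_gt hN
    have h1 : c * N * (2 / d) = 1 := by rw [hc]; field_simp
    rw [map_add, map_smul, map_smul, smul_add, smul_smul, smul_smul, h1, one_smul,
      sub_neg_eq_add, add_comm]
  rw [dist_eq_norm, hkey, norm_smul, Real.norm_eq_abs, abs_of_pos hcpos] at hdle
  have : d ≤ c * N := hdle.trans (by nlinarith [norm_nonneg (f (u + N • (2/d) • x))])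
  rw [hc] at this
  have h2 : d / (2 * N) * N = d / 2 := by field_simp
  rw [h2] at this
  linarith
end

section
/- Let V be a finite-dimensional real inner product space and let U, W be linear subspaces of V with dim U = m ≤ dim W. Let π_W and π_U denote the orthogonal projections of V onto W and onto U, respectively. Then dim π_W(U) = dim U if and only if π_U(W) = U (i.e., the image of W under π_U is all of U). -/
/-! The restrictions `π_U : W → U` and `π_W : U → W` are adjoint to each other, so their images
`π_U(W)` and `π_W(U)` have the same dimension, and `π_U(W) = U` exactly when that dimension is
`dim U`. -/

open Module Submodule

section

variable {𝕜 E : Type*} [RCLike 𝕜] [NormedAddCommGroup E] [InnerProductSpace 𝕜 E]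

theorem Submodule.adjoint_orthogonalProjectionOnto_comp_subtype (U W : Submodule 𝕜 E)
    [FiniteDimensional 𝕜 U] [FiniteDimensional 𝕜 W] :
    LinearMap.adjoint ((U.orthogonalProjectionOnto : E →ₗ[𝕜] U) ∘ₗ W.subtype) =
      (W.orthogonalProjectionOnto : E →ₗ[𝕜] W) ∘ₗ U.subtype :=
  ((LinearMap.eq_adjoint_iff _ _).2 fun u w ↦ by simp).symm

theorem Submodule.finrank_map_orthogonalProjectionOnto_comm (U W : Submodule 𝕜 E)
    [FiniteDimensional 𝕜 U] [FiniteDimensional 𝕜 W] :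
    finrank 𝕜 (U.map (W.orthogonalProjectionOnto : E →ₗ[𝕜] W)) =
      finrank 𝕜 (W.map (U.orthogonalProjectionOnto : E →ₗ[𝕜] U)) := by
  have := LinearMap.finrank_range_adjoint ((U.orthogonalProjectionOnto : E →ₗ[𝕜] U) ∘ₗ W.subtype)
  rwa [adjoint_orthogonalProjectionOnto_comp_subtype, LinearMap.range_comp, LinearMap.range_comp,
    range_subtype, range_subtype] at this

end

theorem finrank_orthogonalProjection_image_eq_iff_general
    {V : Type*} [NormedAddCommGroup V] [InnerProductSpace ℝ V] [FiniteDimensional ℝ V]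
    (U W : Submodule ℝ V) :
    Module.finrank ℝ (U.map (W.orthogonalProjection).toLinearMap) = Module.finrank ℝ U ↔
      W.map (U.orthogonalProjection).toLinearMap = ⊤ := by
  rw [finrank_map_orthogonalProjectionOnto_comm]
  exact ⟨eq_top_of_finrank_eq, fun h ↦ by rw [h, finrank_top]⟩

/-- Lemma: let `V` be a finite-dimensional real inner product space and
`U, W` subspaces with `dim U ≤ dim W`. Then `dim π_W(U) = dim U` iff
`π_U(W) = U`, where `π_K` denotes orthogonal projection onto `K`. -/
theorem finrank_orthogonalProjection_image_eq_iff
    {V : Type*} [NormedAddCommGroup V] [InnerProductSpace ℝ V] [FiniteDimensional ℝ V]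
    (U W : Submodule ℝ V) (hdim : Module.finrank ℝ U ≤ Module.finrank ℝ W) :
    Module.finrank ℝ (U.map (W.orthogonalProjection).toLinearMap) = Module.finrank ℝ U ↔
      W.map (U.orthogonalProjection).toLinearMap = ⊤ :=
  finrank_orthogonalProjection_image_eq_iff_general U W
end

section
/- Let n ≥ 1 and let U₁ ⊆ U₂ be open convex subsets of ℝⁿ with U₁ nonempty. Then invdim(U₁) ≤ invdim(U₂); that is, the dimension of the stabilizer subspace {x ∈ ℝⁿ : x + U₁ = U₁} is at most the dimension of the stabilizer subspace {x ∈ ℝⁿ : x + U₂ = U₂}. -/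
/-!
A translation `v` stabilizing `U₁` moves any `p ∈ U₁` along the ray `p + ℕ • v ⊆ U₁ ⊆ U₂`.
For a convex `U₂` containing such a ray and any `c ∈ U₂`, the points
`c + (1/k) • (p + k • v - c) = c + v + (1/k) • (p - c)` lie in `U₂`, so `c + v ∈ closure U₂`;
doing the same with `2 • v` and using that `U₂` is open, `c + v` is the midpoint of
`c ∈ interior U₂` and `c + 2 • v ∈ closure U₂`, hence lies in `U₂`. Applied to `±v` this gives
`Stab(U₁) ⊆ Stab(U₂)`, and the dimension inequality follows by monotonicity of span and `finrank`.
-/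

/-- The stabilizer of a subset of a real vector space. -/
def setStab {V : Type*} [AddCommGroup V] (U : Set V) : Set V :=
  {x : V | (fun u => x + u) '' U = U}

/-- The invariance dimension of a subset: the dimension of the real span of
its stabilizer. -/
noncomputable def invdim {V : Type*} [AddCommGroup V] [Module ℝ V] (U : Set V) : ℕ :=
  Module.finrank ℝ (Submodule.span ℝ (setStab U))

open Pointwise Filter Topology Set

section Stabilizer

variable {V : Type*} [AddCommGroup V] {U : Set V} {v : V}

theorem setStab_eq_stabilizer (U : Set V) : setStab U = AddAction.stabilizer V U := rfl

theorem add_nsmul_mem_of_mem_setStab (hv : v ∈ setStab U) {p : V} (hp : p ∈ U) (k : ℕ) :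
    p + k • v ∈ U := by
  rw [setStab_eq_stabilizer] at hv
  rw [add_comm, ← AddAction.mem_stabilizer_iff.1 (nsmul_mem hv k)]
  exact vadd_mem_vadd_set hp

theorem mem_setStab_of_forall_add_mem (hadd : ∀ u ∈ U, u + v ∈ U)
    (hsub : ∀ u ∈ U, u + -v ∈ U) : v ∈ setStab U := by
  change v +ᵥ U = U
  refine (vadd_set_subset_iff.2 fun u hu => ?_).antisymm (subset_vadd_set_iff.2 ?_)
  · rw [vadd_eq_add, add_comm]
    exact hadd u hu
  · exact vadd_set_subset_iff.2 fun u hu => by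
      rw [vadd_eq_add, add_comm]
      exact hsub u hu

end Stabilizer

section Recession

variable {E : Type*} [AddCommGroup E] [Module ℝ E] [TopologicalSpace E] [IsTopologicalAddGroup E]
  [ContinuousSMul ℝ E] {U : Set E} {p v c : E}

theorem Convex.add_mem_closure_of_forall_add_nsmul_mem (hconv : Convex ℝ U)
    (hray : ∀ k : ℕ, p + k • v ∈ U) (hc : c ∈ U) : c + v ∈ closure U := by
  have hmem : ∀ k : ℕ, c + v + (1 / ((k : ℝ) + 1)) • (p - c) ∈ U := fun k => by
    have hk : (0 : ℝ) < k + 1 := by positivity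
    have hcombo := hconv.add_smul_sub_mem hc (hray (k + 1))
      (t := 1 / ((k : ℝ) + 1)) ⟨by positivity, (div_le_one hk).2 (by simp)⟩
    convert hcombo using 1
    symm
    rw [← Nat.cast_smul_eq_nsmul ℝ, smul_sub, smul_add, smul_smul, Nat.cast_succ,
      one_div_mul_cancel hk.ne', one_smul]
    module
  have hlim : Tendsto (fun k : ℕ => c + v + (1 / ((k : ℝ) + 1)) • (p - c)) atTop (𝓝 (c + v)) := by
    simpa using
      ((tendsto_one_div_add_atTop_nhds_zero_nat (𝕜 := ℝ)).smul_const (p - c)).const_add (c + v)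
  exact mem_closure_of_tendsto hlim (Eventually.of_forall hmem)

theorem Convex.add_mem_of_forall_add_nsmul_mem (hconv : Convex ℝ U) (hopen : IsOpen U)
    (hray : ∀ k : ℕ, p + k • v ∈ U) (hc : c ∈ U) : c + v ∈ U := by
  have hray₂ : ∀ k : ℕ, p + k • (2 • v) ∈ U := fun k => by
    rw [smul_smul]
    exact hray _
  have hfar := hconv.add_mem_closure_of_forall_add_nsmul_mem hray₂ hc
  have hmid := hconv.add_smul_sub_mem_interior' hfar (hopen.interior_eq.symm ▸ hc)
    (t := (1 / 2 : ℝ)) ⟨by norm_num, by norm_num⟩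
  rw [hopen.interior_eq] at hmid
  convert hmid using 1
  rw [two_nsmul]
  module

end Recession

theorem setStab_subset_setStab_of_isOpen_of_convex {E : Type*} [AddCommGroup E] [Module ℝ E]
    [TopologicalSpace E] [IsTopologicalAddGroup E] [ContinuousSMul ℝ E] {U₁ U₂ : Set E}
    (hopen : IsOpen U₂) (hconv : Convex ℝ U₂) (hsub : U₁ ⊆ U₂) (hne : U₁.Nonempty) :
    setStab U₁ ⊆ setStab U₂ := by
  obtain ⟨p, hp⟩ := hne
  have htransl : ∀ w ∈ setStab U₁, ∀ c ∈ U₂, c + w ∈ U₂ := fun w hw _ hc =>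
    hconv.add_mem_of_forall_add_nsmul_mem hopen
      (fun k => hsub (add_nsmul_mem_of_mem_setStab hw hp k)) hc
  intro v hv
  have hv' : -v ∈ setStab U₁ := by
    rw [setStab_eq_stabilizer] at hv ⊢
    exact neg_mem hv
  exact mem_setStab_of_forall_add_mem (htransl v hv) (htransl (-v) hv')

theorem invdim_mono_general
    (n : ℕ)
    (U₁ U₂ : Set (EuclideanSpace ℝ (Fin n)))
    (hU₂open : IsOpen U₂)
    (hU₂conv : Convex ℝ U₂)
    (hsub : U₁ ⊆ U₂) (hne : U₁.Nonempty) :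
    invdim U₁ ≤ invdim U₂ :=
  Submodule.finrank_mono <| Submodule.span_mono <|
    setStab_subset_setStab_of_isOpen_of_convex hU₂open hU₂conv hsub hne

/-- Lemma: if `U₁ ⊆ U₂` are open convex subsets of `ℝⁿ` with `U₁` nonempty,
then `invdim(U₁) ≤ invdim(U₂)`. -/
theorem invdim_mono
    (n : ℕ) (hn : 1 ≤ n)
    (U₁ U₂ : Set (EuclideanSpace ℝ (Fin n)))
    (hU₁open : IsOpen U₁) (hU₂open : IsOpen U₂)
    (hU₁conv : Convex ℝ U₁) (hU₂conv : Convex ℝ U₂)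
    (hsub : U₁ ⊆ U₂) (hne : U₁.Nonempty) :
    invdim U₁ ≤ invdim U₂ :=
  invdim_mono_general n U₁ U₂ hU₂open hU₂conv hsub hne
end
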